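/- arXiv:2402.15402 — 3 statements merged into one kernel-verified Lean document; each statement's English description precedes it below -/
import Mathlib

section
/- In the abstract rearrangement model with buffers, if B is a feedback vertex set of the dependency digraph G_dep on M vertices, then all objects can be placed at their goals using at most M + |B| pick-and-place steps: each object in B is first moved to a buffer (one step each) and later to its goal (one step each), and each remaining object is moved directly to its goal (one step each). -/
/-- `B` is a feedback vertex set: the induced subgraph on the complement of `B` is acyclic. -/
def IsFVS {V : Type} (E : V → V → Prop) (B : Finset V) : Prop :=
  ∀ v, ¬ Relation.TransGen (fun a b => E a b ∧ a ∉ B ∧ b ∉ B) v v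

/-- A schedule is a list of steps `(v, move)` where `move = true` means moving `v` to its
goal and `move = false` means moving `v` to a buffer.  A schedule is valid if whenever an
object is moved to its goal, every object occupying its goal (its out-neighbors in the
dependency digraph) has been displaced at an earlier step. -/
def ValidSchedule {V : Type} (E : V → V → Prop) (L : List (V × Bool)) : Prop :=
  ∀ i : Fin L.length, (L.get i).2 = true →
    ∀ w, E (L.get i).1 w → ∃ j : Fin L.length, (j : ℕ) < (i : ℕ) ∧ (L.get j).1 = w

/-- A schedule is complete if every object is eventually moved to its goal. -/
def CompleteSchedule {V : Type} (L : List (V × Bool)) : Prop :=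
  ∀ v : V, (v, true) ∈ L

/-!
Move every object of `B` to a buffer first. After that, a goal move of `v` can only be blocked
by an out-neighbour outside `B`, and these remaining dependencies are acyclic because `B` is a
feedback vertex set. Hence the other objects can be placed directly, each one after all of its
remaining out-neighbours (a reverse topological order), for `|B| + M` steps in total.
-/

open Relation

theorem Relation.TransGen.induce_of_notMem {α : Type*} {r : α → α → Prop} {s : Set α} {a b : α}
    (h : TransGen (fun v w => r v w ∧ w ∉ s) a b) (ha : a ∉ s) :
    TransGen (fun v w => r v w ∧ v ∉ s ∧ w ∉ s) a b := by
  induction h using TransGen.head_induction_on with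
  | single hab => exact .single ⟨hab.1, ha, hab.2⟩
  | head hac _ ih => exact .head ⟨hac.1, ha, hac.2⟩ (ih hac.2)

theorem wellFounded_flip_of_forall_not_transGen {α : Type*} [Finite α] {r : α → α → Prop}
    (h : ∀ a, ¬ TransGen r a a) : WellFounded (flip r) :=
  have : Std.Irrefl (TransGen (flip r)) := ⟨fun a ha => h a (transGen_swap.1 ha)⟩
  Subrelation.wf TransGen.single (Finite.wellFounded_of_trans_of_irrefl _)

theorem IsFVS.wellFounded {V : Type} [Finite V] {E : V → V → Prop} {B : Finset V}
    (hB : IsFVS E B) : WellFounded (flip fun v w => E v w ∧ w ∉ (B : Set V)) :=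
  wellFounded_flip_of_forall_not_transGen fun v hv => by
    obtain ⟨_, _, _, hvB⟩ := TransGen.tail'_iff.1 hv
    exact hB v (hv.induce_of_notMem hvB)

section Schedule

variable {V : Type} (E : V → V → Prop)

/-- `ValidScheduleFrom E D L`: the schedule `L` is valid when the objects of `D` have already
been displaced before it starts. -/
def ValidScheduleFrom : Set V → List (V × Bool) → Prop
  | _, [] => True
  | D, (v, b) :: L => (b = true → ∀ w, E v w → w ∈ D) ∧ ValidScheduleFrom (insert v D) L

variable {E}

theorem validScheduleFrom_iff {D : Set V} {L : List (V × Bool)} :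
    ValidScheduleFrom E D L ↔ ∀ i : Fin L.length, (L.get i).2 = true → ∀ w, E (L.get i).1 w →
      w ∈ D ∨ ∃ j : Fin L.length, (j : ℕ) < (i : ℕ) ∧ (L.get j).1 = w := by
  induction L generalizing D with
  | nil => simp [ValidScheduleFrom]
  | cons x L ih =>
    obtain ⟨v, b⟩ := x
    simp only [ValidScheduleFrom, ih, List.length_cons, Fin.forall_fin_succ, Fin.exists_fin_succ]
    simp [eq_comm (a := v), or_assoc, or_left_comm]

theorem validSchedule_iff_validScheduleFrom_empty {L : List (V × Bool)} :
    ValidSchedule E L ↔ ValidScheduleFrom E ∅ L := by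
  simp [validScheduleFrom_iff, ValidSchedule]

theorem validScheduleFrom_buffer_append {D : Set V} (l : List V) (L : List (V × Bool)) :
    ValidScheduleFrom E D (l.map (·, false) ++ L) ↔ ValidScheduleFrom E (D ∪ {v | v ∈ l}) L := by
  induction l generalizing D with
  | nil => simp
  | cons v l ih =>
    simp only [List.map_cons, List.cons_append, ValidScheduleFrom, ih, List.mem_cons,
      Set.ofPred_or, Set.ofPred_eq_eq_singleton, Bool.false_eq_true, false_imp_iff,
      true_and, ← Set.insert_eq, Set.insert_union, Set.union_insert]

theorem exists_validScheduleFrom_goals (D : Set V)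
    (hwf : WellFounded (flip fun v w => E v w ∧ w ∉ D)) (S : Finset V) :
    ∃ l : List V, l.length = S.card ∧ (∀ v ∈ S, v ∈ l) ∧
      ValidScheduleFrom E (D ∪ (↑S)ᶜ) (l.map (·, true)) := by
  classical
  induction S using Finset.strongInduction with
  | H S ih =>
    rcases S.eq_empty_or_nonempty with rfl | hS
    · exact ⟨[], by simp, by simp, trivial⟩
    obtain ⟨m, hmS, hmin⟩ := hwf.has_min S hS
    obtain ⟨l, hlen, hmem, hvalid⟩ := ih (S.erase m) (Finset.erase_ssubset hmS)
    have hm_ready : ∀ w, E m w → w ∈ D ∪ (↑S)ᶜ := by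
      intro w hmw
      by_contra hw
      simp only [Set.mem_union, Set.mem_compl_iff, Finset.mem_coe, not_or, not_not] at hw
      exact hmin w hw.2 ⟨hmw, hw.1⟩
    have hD : insert m (D ∪ (↑S)ᶜ) = D ∪ (↑(S.erase m))ᶜ := by
      ext x
      by_cases hx : x = m <;> simp [hx, hmS]
    refine ⟨m :: l, by simp [hlen, Finset.card_erase_add_one hmS], fun v hv => ?_,
      ⟨fun _ => hm_ready, hD ▸ hvalid⟩⟩
    by_cases hvm : v = m
    · simp [hvm]
    · exact List.mem_cons_of_mem _ (hmem v (Finset.mem_erase.2 ⟨hvm, hv⟩))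

end Schedule

/-- Upper bound: if `B` is a feedback vertex set of the dependency digraph on `M` objects,
then all objects can be placed at their goals using at most `M + |B|` pick-and-place steps. -/
theorem rearrangement_upper_bound {V : Type} [Fintype V] (E : V → V → Prop) (B : Finset V)
    (hB : IsFVS E B) :
    ∃ L : List (V × Bool), ValidSchedule E L ∧ CompleteSchedule L ∧
      L.length ≤ Fintype.card V + B.card := by
  obtain ⟨l, hlen, hmem, hvalid⟩ := exists_validScheduleFrom_goals (B : Set V) hB.wellFounded .univ
  refine ⟨B.toList.map (·, false) ++ l.map (·, true), ?_, ?_, ?_⟩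
  · have hbuf : (∅ ∪ {v | v ∈ B.toList} : Set V) = ↑B ∪ ((Finset.univ : Finset V) : Set V)ᶜ := by
      ext; simp
    rwa [validSchedule_iff_validScheduleFrom_empty, validScheduleFrom_buffer_append, hbuf]
  · exact fun v => List.mem_append_right _ (List.mem_map_of_mem (hmem v (Finset.mem_univ v)))
  · simp [hlen, add_comm]
end

section
/- In the abstract rearrangement model, any valid schedule that moves all M objects to their goals must use at least M + |B*| pick-and-place steps, where |B*| is the size of a minimum feedback vertex set of the dependency digraph: each object needs at least one move, and for every directed cycle of the dependency graph at least one of its objects must be moved to a non-goal (buffer) location first, costing an extra move; a set of objects receiving extra moves whose removal breaks all cycles is a feedback vertex set. -/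
variable {V : Type}

open Classical in
/-- The index of the first step touching `v` (`L.length` if there is none). -/
noncomputable def firstVisit (L : List (V × Bool)) (v : V) : ℕ :=
  L.findIdx fun s => s.1 = v

lemma firstVisit_lt_length {L : List (V × Bool)} {v : V} {b : Bool} (h : (v, b) ∈ L) :
    firstVisit L v < L.length :=
  List.findIdx_lt_length_of_exists ⟨_, h, by simp⟩

open Classical in
lemma fst_getElem_firstVisit {L : List (V × Bool)} {v : V} (h : firstVisit L v < L.length) :
    L[firstVisit L v].1 = v :=
  of_decide_eq_true (List.findIdx_getElem (w := h))

lemma firstVisit_le {L : List (V × Bool)} {v : V} {i : ℕ} (hi : i < L.length)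
    (hv : L[i].1 = v) : firstVisit L v ≤ i := by
  by_contra! h
  simpa [hv] using List.not_of_lt_findIdx h

lemma firstVisit_lt_firstVisit_of_edge {E : V → V → Prop} {L : List (V × Bool)}
    (hL : ValidSchedule E L) {a b : V} (hab : E a b) (ha : (a, true) ∈ L)
    (ha' : (a, false) ∉ L) : firstVisit L b < firstVisit L a := by
  have hlt := firstVisit_lt_length ha
  have hfst := fst_getElem_firstVisit hlt
  have hgoal : L[firstVisit L a].2 = true := by
    by_contra hbuf
    refine ha' ?_
    rw [← hfst, ← Bool.eq_false_iff.mpr hbuf]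
    exact List.getElem_mem hlt
  obtain ⟨j, hj, hjb⟩ := hL ⟨firstVisit L a, hlt⟩ hgoal b (by simpa [hfst] using hab)
  exact (firstVisit_le j.isLt hjb).trans_lt hj

open Classical in
noncomputable def bufferedObjects [Fintype V] (L : List (V × Bool)) : Finset V :=
  Finset.univ.filter fun v => (v, false) ∈ L

lemma mem_bufferedObjects [Fintype V] {L : List (V × Bool)} {v : V} :
    v ∈ bufferedObjects L ↔ (v, false) ∈ L := by
  simp [bufferedObjects]

lemma isFVS_bufferedObjects [Fintype V] {E : V → V → Prop} {L : List (V × Bool)}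
    (hL : ValidSchedule E L) (hC : CompleteSchedule L) : IsFVS E (bufferedObjects L) := by
  intro v hcycle
  have hdesc : Relation.TransGen (· > ·) (firstVisit L v) (firstVisit L v) :=
    Relation.TransGen.lift (p := (· > ·)) (firstVisit L)
      (fun a b hab =>
        firstVisit_lt_firstVisit_of_edge hL hab.1 (hC a) (mem_bufferedObjects.not.mp hab.2.1))
      v v hcycle
  rw [Relation.transGen_eq_self] at hdesc
  exact lt_irrefl _ hdesc

lemma card_add_card_bufferedObjects_le_length [Fintype V] {L : List (V × Bool)}
    (hC : CompleteSchedule L) : Fintype.card V + (bufferedObjects L).card ≤ L.length := by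
  classical
  set S := Finset.univ ×ˢ {true} ∪ bufferedObjects L ×ˢ {false}
  have hdisj : Disjoint (Finset.univ ×ˢ {true}) (bufferedObjects L ×ˢ {false}) :=
    Finset.disjoint_product.mpr (Or.inr (by simp))
  have hsub : S ⊆ L.toFinset := by
    rintro ⟨v, b⟩ hs
    simp only [S, Finset.mem_union, Finset.mem_product, Finset.mem_singleton,
      mem_bufferedObjects] at hs
    rcases hs with ⟨-, rfl⟩ | ⟨hv, rfl⟩
    · exact List.mem_toFinset.mpr (hC v)
    · exact List.mem_toFinset.mpr hv
  calc Fintype.card V + (bufferedObjects L).card = S.card := by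
        rw [Finset.card_union_of_disjoint hdisj, Finset.card_product, Finset.card_product]
        simp
    _ ≤ L.toFinset.card := Finset.card_le_card hsub
    _ ≤ L.length := L.toFinset_card_le

theorem rearrangement_lower_bound_general {V : Type} [Fintype V] (E : V → V → Prop) (B : Finset V)
    (hmin : ∀ B' : Finset V, IsFVS E B' → B.card ≤ B'.card)
    (L : List (V × Bool)) (hL : ValidSchedule E L) (hC : CompleteSchedule L) :
    Fintype.card V + B.card ≤ L.length :=
  calc Fintype.card V + B.card ≤ Fintype.card V + (bufferedObjects L).card :=
        Nat.add_le_add_left (hmin _ (isFVS_bufferedObjects hL hC)) _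
    _ ≤ L.length := card_add_card_bufferedObjects_le_length hC

/-- Lower bound: any valid schedule moving all `M` objects to their goals uses at least
`M + |B*|` pick-and-place steps, where `B*` is a minimum feedback vertex set. -/
theorem rearrangement_lower_bound {V : Type} [Fintype V] (E : V → V → Prop) (B : Finset V)
    (hB : IsFVS E B) (hmin : ∀ B' : Finset V, IsFVS E B' → B.card ≤ B'.card)
    (L : List (V × Bool)) (hL : ValidSchedule E L) (hC : CompleteSchedule L) :
    Fintype.card V + B.card ≤ L.length :=
  rearrangement_lower_bound_general E B hmin L hL hC
end

section
/- Combining upper and lower bounds: the minimum number of pick-and-place steps to solve the abstract rearrangement problem with dependency digraph G_dep on M objects equals M + |B*|, where |B*| is the minimum feedback vertex set size of G_dep. -/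
/-!
Upper bound: once a feedback vertex set `B` sits in buffers, only the edges into `Bᶜ` still
constrain goal moves, and these form an acyclic relation. Placing every object at its goal in
order of a rank function for that relation is valid and takes `|V| + |B|` steps.

Lower bound: given a valid complete schedule, let `B'` be the objects touched before their first
goal move. On an edge `a → b` with `a, b ∉ B'`, the object `b` is touched before the first goal
move of `a`, hence not before its own, so `b` reaches its goal first. First-goal-move times thus
decrease strictly along edges outside `B'`, which makes `B'` a feedback vertex set. Every object
occurs in the schedule, and those in `B'` at least twice, so its length is at least
`|V| + |B'| ≥ |V| + |B*|`.
-/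

open Relation Finset

section

variable {V : Type}

lemma exists_rank_of_acyclic [Fintype V] (R : V → V → Prop) (hR : ∀ v, ¬ TransGen R v v) :
    ∃ f : V → ℕ, ∀ a b, R a b → f b < f a := by
  classical
  refine ⟨fun v => #{w | TransGen R v w}, fun a b hab => card_lt_card ?_⟩
  refine (ssubset_iff_of_subset fun w hw => ?_).2 ⟨b, ?_, ?_⟩
  · simp only [mem_filter, mem_univ, true_and] at hw ⊢
    exact .head hab hw
  · simpa using TransGen.single hab
  · simpa using hR b

lemma isFVS_of_rank {α : Type*} [Preorder α] {E : V → V → Prop} {B : Finset V} (f : V → α)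
    (hf : ∀ a b, E a b → a ∉ B → b ∉ B → f b < f a) : IsFVS E B := by
  have hpath : ∀ a b, TransGen (fun a b => E a b ∧ a ∉ B ∧ b ∉ B) a b → f b < f a := by
    intro a b h
    induction h with
    | single h => exact hf _ _ h.1 h.2.1 h.2.2
    | tail _ h ih => exact (hf _ _ h.1 h.2.1 h.2.2).trans ih
  exact fun v hv => lt_irrefl _ (hpath v v hv)

lemma IsFVS.exists_rank [Fintype V] {E : V → V → Prop} {B : Finset V} (hB : IsFVS E B) :
    ∃ f : V → ℕ, ∀ a b, E a b → b ∉ B → f b < f a := by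
  set R : V → V → Prop := fun a b => E a b ∧ b ∉ B
  -- every vertex of an `R`-cycle is the target of an edge, so the cycle avoids `B`
  have hlift : ∀ a b, TransGen R a b → a ∉ B →
      TransGen (fun a b => E a b ∧ a ∉ B ∧ b ∉ B) a b := by
    intro a b h
    induction h using TransGen.head_induction_on with
    | single h => exact fun ha => .single ⟨h.1, ha, h.2⟩
    | head h _ ih => exact fun ha => .head ⟨h.1, ha, h.2⟩ (ih h.2)
  have hR : ∀ v, ¬ TransGen R v v := fun v hv => by
    obtain ⟨u, -, hu⟩ := TransGen.tail'_iff.1 hv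
    exact hB v (hlift v v hv hu.2)
  obtain ⟨f, hf⟩ := exists_rank_of_acyclic R hR
  exact ⟨f, fun a b hab hb => hf a b ⟨hab, hb⟩⟩

lemma List.mem_take_of_pairwise_le_of_lt {α β : Type*} [Preorder β] {f : α → β} {l : List α}
    (hl : l.Pairwise (fun a b => f a ≤ f b)) {w : α} (hw : w ∈ l) {k : ℕ} (hk : k < l.length)
    (hlt : f w < f l[k]) : w ∈ l.take k := by
  obtain ⟨j, hj, rfl⟩ := List.mem_iff_getElem.1 hw
  refine List.mem_take_iff_getElem.2 ⟨j, lt_min ?_ hj, rfl⟩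
  by_contra! hkj
  rcases hkj.lt_or_eq with hkj | rfl
  · exact hlt.not_ge (List.pairwise_iff_getElem.1 hl k j hk hj hkj)
  · exact lt_irrefl _ hlt

lemma validSchedule_iff {E : V → V → Prop} {L : List (V × Bool)} :
    ValidSchedule E L ↔ ∀ (i : ℕ) (hi : i < L.length), L[i].2 = true →
      ∀ w, E L[i].1 w → w ∈ (L.take i).map Prod.fst := by
  simp only [ValidSchedule, Fin.forall_iff, Fin.exists_iff, List.get_eq_getElem, List.mem_map,
    List.mem_take_iff_getElem]
  refine forall₂_congr fun i _ => imp_congr_right fun _ => forall₂_congr fun w _ => ⟨?_, ?_⟩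
  · rintro ⟨j, hj, hji, rfl⟩
    exact ⟨L[j], ⟨j, lt_min hji hj, rfl⟩, rfl⟩
  · rintro ⟨_, ⟨j, hj, rfl⟩, rfl⟩
    exact ⟨j, (lt_min_iff.1 hj).2, (lt_min_iff.1 hj).1, rfl⟩

lemma validSchedule_buffer_append_place {E : V → V → Prop} {B : Finset V} {l : List V}
    (f : V → ℕ) (hf : ∀ a b, E a b → b ∉ B → f b < f a) (hl : ∀ v, v ∈ l)
    (hsorted : l.Pairwise (fun a b => f a ≤ f b)) :
    ValidSchedule E (B.toList.map (·, false) ++ l.map (·, true)) := by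
  rw [validSchedule_iff]
  intro i hi htrue w hw
  by_cases hiP : i < (B.toList.map (·, false)).length
  · simp [List.getElem_append_left hiP] at htrue
  obtain ⟨k, rfl⟩ := Nat.exists_eq_add_of_le (not_lt.1 hiP)
  have hk : k < l.length := by simpa using hi
  rw [List.getElem_append_right (Nat.le_add_right _ _)] at hw
  simp only [Nat.add_sub_cancel_left, List.getElem_map] at hw
  simp only [List.take_length_add_append, List.map_append, List.map_take, List.map_map,
    Function.comp_def, List.map_id', List.mem_append, mem_toList]
  exact (em (w ∈ B)).imp id fun hwB =>
    List.mem_take_of_pairwise_le_of_lt hsorted (hl w) hk (hf _ _ hw hwB)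

lemma IsFVS.exists_validSchedule [Fintype V] {E : V → V → Prop} {B : Finset V} (hB : IsFVS E B) :
    ∃ L, ValidSchedule E L ∧ CompleteSchedule L ∧ L.length = Fintype.card V + B.card := by
  obtain ⟨f, hf⟩ := hB.exists_rank
  set l := (univ : Finset V).toList.mergeSort (fun a b => f a ≤ f b)
  have hsorted : l.Pairwise (fun a b => f a ≤ f b) := by
    simpa using List.pairwise_mergeSort (le := fun a b => decide (f a ≤ f b))
      (by simpa using fun a b c => le_trans) (by simpa using fun a b => le_total (f a) (f b)) _
  have hmem : ∀ v, v ∈ l := fun v => List.mem_mergeSort.2 (mem_toList.2 (mem_univ v))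
  refine ⟨B.toList.map (·, false) ++ l.map (·, true),
    validSchedule_buffer_append_place f hf hmem hsorted, fun v => ?_, ?_⟩
  · simp [hmem]
  · simp [l, add_comm]

section LowerBound

variable [DecidableEq V]

def movedBeforeGoal [Fintype V] (L : List (V × Bool)) : Finset V :=
  {v | v ∈ (L.take (L.idxOf (v, true))).map Prod.fst}

lemma idxOf_lt_idxOf_of_validSchedule [Fintype V] {E : V → V → Prop} {L : List (V × Bool)}
    (hL : ValidSchedule E L) {a b : V} (ha : (a, true) ∈ L) (hab : E a b)
    (hb : b ∉ movedBeforeGoal L) : L.idxOf (b, true) < L.idxOf (a, true) := by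
  have hlt := List.idxOf_lt_length_iff.2 ha
  have hprev := validSchedule_iff.1 hL _ hlt (by rw [List.getElem_idxOf]) b
    (by rw [List.getElem_idxOf]; exact hab)
  by_contra! hle
  exact hb (by simpa [movedBeforeGoal] using ((List.take_prefix_take_left hle).map _).subset hprev)

lemma isFVS_movedBeforeGoal [Fintype V] {E : V → V → Prop} {L : List (V × Bool)}
    (hL : ValidSchedule E L) (hC : CompleteSchedule L) : IsFVS E (movedBeforeGoal L) :=
  isFVS_of_rank (fun v => L.idxOf (v, true)) fun a _ hab _ hb =>
    idxOf_lt_idxOf_of_validSchedule hL (hC a) hab hb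

lemma card_add_card_movedBeforeGoal_le [Fintype V] {L : List (V × Bool)}
    (hC : CompleteSchedule L) : Fintype.card V + #(movedBeforeGoal L) ≤ L.length := by
  have hcount : ∀ v, 1 + (if v ∈ movedBeforeGoal L then 1 else 0) ≤ (L.map Prod.fst).count v := by
    intro v
    set k := L.idxOf (v, true)
    have hk : k < L.length := List.idxOf_lt_length_iff.2 (hC v)
    have hsplit : (L.map Prod.fst).count v =
        ((L.take k).map Prod.fst).count v + ((L.drop k).map Prod.fst).count v := by
      rw [← List.count_append, ← List.map_append, List.take_append_drop]
    have hdrop : 1 ≤ ((L.drop k).map Prod.fst).count v :=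
      List.count_pos_iff.2 (by rw [List.drop_eq_getElem_cons hk, List.getElem_idxOf]; simp)
    have htake : (if v ∈ movedBeforeGoal L then 1 else 0) ≤ ((L.take k).map Prod.fst).count v := by
      split_ifs with h
      · exact List.count_pos_iff.2 (by simpa [movedBeforeGoal] using h)
      · exact Nat.zero_le _
    omega
  calc Fintype.card V + #(movedBeforeGoal L)
      = ∑ v, (1 + if v ∈ movedBeforeGoal L then 1 else 0) := by simp [sum_add_distrib]
    _ ≤ ∑ v, (L.map Prod.fst).count v := sum_le_sum fun v _ => hcount v
    _ = L.length := by
      simpa using Multiset.sum_count_eq_card (s := univ) (m := (L.map Prod.fst : Multiset V))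
        (by simp)

end LowerBound

end

/-- The minimum number of pick-and-place steps to solve the rearrangement problem with
dependency digraph `E` on `M` objects equals `M + |B*|`, where `B*` is a minimum feedback
vertex set: there is a valid complete schedule of exactly that length, and no valid
complete schedule is shorter. -/
theorem rearrangement_optimal_steps {V : Type} [Fintype V] (E : V → V → Prop) (B : Finset V)
    (hB : IsFVS E B) (hmin : ∀ B' : Finset V, IsFVS E B' → B.card ≤ B'.card) :
    (∃ L : List (V × Bool), ValidSchedule E L ∧ CompleteSchedule L ∧
        L.length = Fintype.card V + B.card) ∧
      ∀ L : List (V × Bool), ValidSchedule E L → CompleteSchedule L →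
        Fintype.card V + B.card ≤ L.length := by
  classical
  refine ⟨hB.exists_validSchedule, fun L hL hC => ?_⟩
  calc Fintype.card V + B.card ≤ Fintype.card V + #(movedBeforeGoal L) :=
        Nat.add_le_add_left (hmin _ (isFVS_movedBeforeGoal hL hC)) _
    _ ≤ L.length := card_add_card_movedBeforeGoal_le hC
end
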